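/- arXiv:1812.07882 — 4 statements merged into one kernel-verified Lean document; each statement's English description precedes it below -/
import Mathlib

section
/- Let F be a field, b and n natural numbers with 1 ≤ b ≤ n, and let A_b be the b-dimensional F-vector space with basis e_1,…,e_b on which the symmetric group S_b acts by permuting basis vectors. If the characteristic of F is an odd prime p and 1 < c ≤ b, then the subspace of the c-th exterior power ⋀^c A_b fixed by all elements of S_b is zero; if c = 1, the fixed subspace is the one-dimensional span of e_1 + ⋯ + e_b. -/
/-!
Expand a fixed vector of `⋀^c F^b` in the basis `e_S = e_{s₁} ∧ ⋯ ∧ e_{s_c}`, `s₁ < ⋯ < s_c`.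
For `c > 1` choose `i ≠ j` in `S`: the transposition `(i j)` reverses the order of two factors
of `e_S`, so it negates the `e_S`-coordinate functional; a fixed vector therefore has
`e_S`-coordinate equal to its own negative, which is `0` since `2 ≠ 0` in `F`.
In degree one a fixed vector is `ι x` with `x : Fin b → F` invariant under all permutations,
i.e. a constant function.
-/

open ExteriorAlgebra

variable (F : Type*) [Field F]

/-- The linear action of a permutation `σ ∈ S_b` on `A_b = F^b`, permuting the basis
vectors: `σ · e_i = e_{σ i}`. -/
noncomputable def permAction (b : ℕ) (σ : Equiv.Perm (Fin b)) :
    (Fin b → F) →ₗ[F] (Fin b → F) :=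
  LinearMap.funLeft F F ⇑σ⁻¹

namespace exteriorPower

variable {R M N : Type*} [CommRing R] [AddCommGroup M] [Module R M] [AddCommGroup N] [Module R N]

theorem coe_map (n : ℕ) (f : M →ₗ[R] N) (x : ⋀[R]^n M) :
    (map n f x : ExteriorAlgebra R N) = ExteriorAlgebra.map f x := by
  suffices (⋀[R]^n N).subtype ∘ₗ map n f
      = (ExteriorAlgebra.map f).toLinearMap ∘ₗ (⋀[R]^n M).subtype from
    LinearMap.congr_fun this x
  ext v
  simp [ExteriorAlgebra.map_apply_ιMulti]

theorem ιMultiDual_comp_map_funLeft_swap {I : Type*} [Finite I] [LinearOrder I] {n : ℕ}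
    (s : Set.powersetCard I n) {i j : I} (hi : i ∈ s) (hj : j ∈ s) (hij : i ≠ j) :
    ιMultiDual R n (Pi.basisFun R I) s ∘ₗ map n (LinearMap.funLeft R R (Equiv.swap i j))
      = -ιMultiDual R n (Pi.basisFun R I) s := by
  obtain ⟨a, rfl⟩ := (Set.powersetCard.mem_range_ofFinEmbEquiv_symm_iff_mem s i).mpr hi
  obtain ⟨a', rfl⟩ := (Set.powersetCard.mem_range_ofFinEmbEquiv_symm_iff_mem s _).mpr hj
  have ha : a ≠ a' := fun h => hij (congrArg _ h)
  have swap_cols (A : Matrix (Fin n) (Fin n) R) :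
      (A.submatrix id (Equiv.swap a a')).det = -A.det := by
    simp [Matrix.det_permute', Equiv.Perm.sign_swap ha]
  ext v
  simp only [LinearMap.neg_apply, LinearMap.compAlternatingMap_apply, LinearMap.coe_comp,
    Function.comp_apply, map_apply_ιMulti, ιMultiDual_apply_ιMulti]
  simp_rw [Module.Basis.coord_apply, Pi.basisFun_repr, LinearMap.funLeft_apply,
    (Set.powersetCard.ofFinEmbEquiv.symm s).injective.swap_apply]
  exact swap_cols (.of fun k l => v k (Set.powersetCard.ofFinEmbEquiv.symm s l))

theorem eq_zero_of_forall_map_funLeft_swap_eq [IsDomain R] (hR : ringChar R ≠ 2)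
    {I : Type*} [Finite I] [LinearOrder I] {n : ℕ} (hn : 1 < n) {x : ⋀[R]^n (I → R)}
    (hx : ∀ i j : I, map n (LinearMap.funLeft R R (Equiv.swap i j)) x = x) : x = 0 := by
  refine ((Pi.basisFun R I).exteriorPower n).forall_coord_eq_zero_iff.mp fun s => ?_
  obtain ⟨i, hi, j, hj, hij⟩ : (s : Set I).Nontrivial := Set.powersetCard.coe_nontrivial_iff.mpr hn
  have hneg : ιMultiDual R n (Pi.basisFun R I) s x = -ιMultiDual R n (Pi.basisFun R I) s x := by
    conv_lhs => rw [← hx i j]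
    exact LinearMap.congr_fun (ιMultiDual_comp_map_funLeft_swap s hi hj hij) x
  rw [basis_coord]
  exact (Ring.eq_self_iff_eq_zero_of_char_ne_two hR).mp hneg.symm

end exteriorPower

theorem fixed_points_exterior_power_perm_module (p : ℕ) (hodd : p ≠ 2)
    [CharP F p] (b c : ℕ) (hcb : c ≤ b) :
    (1 < c → {v : ExteriorAlgebra F (Fin b → F) |
        v ∈ ⋀[F]^c (Fin b → F) ∧
        ∀ σ : Equiv.Perm (Fin b), ExteriorAlgebra.map (permAction F b σ) v = v} = {0})
    ∧ (c = 1 → {v : ExteriorAlgebra F (Fin b → F) |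
        v ∈ ⋀[F]^c (Fin b → F) ∧
        ∀ σ : Equiv.Perm (Fin b), ExteriorAlgebra.map (permAction F b σ) v = v}
      = ↑(Submodule.span F
          {ExteriorAlgebra.ι F (fun _ : Fin b => (1 : F))})) := by
  constructor
  · intro hc
    refine Set.eq_singleton_iff_unique_mem.mpr ⟨⟨zero_mem _, fun σ => map_zero _⟩, ?_⟩
    rintro v ⟨hv, hfix⟩
    suffices (⟨v, hv⟩ : ⋀[F]^c (Fin b → F)) = 0 from congrArg Subtype.val this
    refine exteriorPower.eq_zero_of_forall_map_funLeft_swap_eq (ringChar.eq F p ▸ hodd) hc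
      fun i j => Subtype.ext ?_
    rw [exteriorPower.coe_map]
    simpa [permAction] using hfix (Equiv.swap i j)
  · rintro rfl
    ext v
    simp only [Set.mem_ofPred_eq, SetLike.mem_coe, Submodule.mem_span_singleton]
    rw [show ⋀[F]^1 (Fin b → F) = LinearMap.range (ι F) from pow_one _]
    constructor
    · rintro ⟨⟨x, rfl⟩, hfix⟩
      have hx (σ : Equiv.Perm (Fin b)) : permAction F b σ x = x :=
        (ι_inj F _ _).mp ((map_apply_ι _ _).symm.trans (hfix σ))
      have hconst (i : Fin b) : x i = x ⟨0, hcb⟩ := by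
        simpa [permAction] using (congrFun (hx (Equiv.swap i ⟨0, hcb⟩)) i).symm
      refine ⟨x ⟨0, hcb⟩, ?_⟩
      rw [← map_smul]
      congr
      funext i
      simp [hconst i]
    · rintro ⟨r, rfl⟩
      exact ⟨⟨r • fun _ => 1, map_smul _ _ _⟩, fun σ => by rw [map_smul, map_apply_ι]; rfl⟩
end

section
/- Let F be a field of characteristic 2, let A_n = F^n with basis e_1,…,e_n, and set f_i = e_i - e_n. Let a, b be natural numbers with 1 ≤ a ≤ b < n and let s ∈ {b+1,…,n}. Define v_{b,a} = ∑ f_{i_1}∧⋯∧f_{i_a}, the sum over all 1 ≤ i_1 < ⋯ < i_a ≤ b. Then ∑_{1≤i_1<⋯<i_a≤b} (e_{i_1}+e_s)∧⋯∧(e_{i_a}+e_s) equals v_{b,a} + b·f_s if a = 1, and equals v_{b,a} + (b-a+1)·f_s ∧ v_{b,a-1} if a > 1, where all sums and wedge products are taken in ⋀^a A_n. -/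
open ExteriorAlgebra

variable (F : Type*) [Field F]

/-- Given vectors `g i` in `F^n` indexed by `Fin n`, the sum of the wedge products
`g_{i_1} ∧ ⋯ ∧ g_{i_a}` over all increasing tuples `i_1 < ⋯ < i_a` with all indices
`< b`, computed inside the exterior algebra of `F^n`. -/
noncomputable def wedgeSum (n : ℕ) (g : Fin n → (Fin n → F)) (b a : ℕ) :
    ExteriorAlgebra F (Fin n → F) :=
  ∑ s ∈ (Finset.univ.filter
      (fun s : Finset (Fin n) => s.card = a ∧ ∀ i ∈ s, (i : ℕ) < b)).attach,
    ExteriorAlgebra.ιMulti F a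
      (fun j => g (s.1.orderIsoOfFin ((Finset.mem_filter.mp s.2).2.1) j))

section Aux

variable {F}


lemma card_count {n b m : ℕ} (hbn : b < n) (T : Finset (Fin n)) (hcard : T.card = m)
    (hT : ∀ i ∈ T, (i : ℕ) < b) :
    (Finset.univ.filter (fun y : Fin n => y ∉ T ∧ (y : ℕ) < b)).card = b - m := by
  have h1 : Finset.univ.filter (fun y : Fin n => y ∉ T ∧ (y : ℕ) < b)
      = (Finset.univ.filter (fun y : Fin n => (y : ℕ) < b)) \ T := by
    ext y
    simp only [Finset.mem_filter, Finset.mem_univ, true_and, Finset.mem_sdiff]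
    tauto
  rw [h1, Finset.card_sdiff_of_subset (fun y hy => by simp [hT y hy]), hcard]
  congr 1
  have h2 : Finset.univ.filter (fun y : Fin n => (y : ℕ) < b)
      = Finset.Iio (⟨b, hbn⟩ : Fin n) := by
    ext y
    simp [Fin.lt_def]
  rw [h2, Fin.card_Iio]


lemma neg_eq_self_char_two (p2 : CharP F 2) {E : Type*} [AddCommGroup E] [Module F E]
    (x : E) : -x = x := by
  have h2 : (2 : F) = 0 := by haveI := p2; exact_mod_cast CharP.cast_eq_zero F 2
  have h : x + x = 0 := by rw [← two_smul F x, h2, zero_smul]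
  exact neg_eq_of_add_eq_zero_left h

lemma ιMulti_update (p2 : CharP F 2) {M : Type*} [AddCommGroup M] [Module F M]
    {m : ℕ} (v : Fin (m + 1) → M) (k : Fin (m + 1)) (c : M) :
    ExteriorAlgebra.ιMulti F (m + 1) (Function.update v k c)
      = ExteriorAlgebra.ι F c * ExteriorAlgebra.ιMulti F m (v ∘ k.succAbove) := by
  have hcomp : (Function.update v k c) ∘ (k.cycleRange.symm : Equiv.Perm (Fin (m + 1)))
      = Fin.cons c (v ∘ k.succAbove) := by
    funext i
    induction i using Fin.cases with
    | zero =>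
        rw [Function.comp_apply, Fin.cycleRange_symm_zero, Function.update_self, Fin.cons_zero]
    | succ j =>
        rw [Function.comp_apply, Fin.cycleRange_symm_succ,
          Function.update_of_ne (Fin.succAbove_ne k j), Fin.cons_succ, Function.comp_apply]
  have hperm := (ExteriorAlgebra.ιMulti F (m + 1)).map_perm (Function.update v k c)
    (k.cycleRange.symm : Equiv.Perm (Fin (m + 1)))
  rw [hcomp] at hperm
  have hsign : ExteriorAlgebra.ιMulti F (m + 1) (Fin.cons c (v ∘ k.succAbove))
      = ExteriorAlgebra.ιMulti F (m + 1) (Function.update v k c) := by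
    rcases Int.units_eq_one_or (Equiv.Perm.sign (k.cycleRange.symm : Equiv.Perm (Fin (m + 1))))
      with h | h
    · rw [h, one_smul] at hperm; exact hperm
    · rw [h, Units.smul_def, Units.val_neg, Units.val_one, neg_one_zsmul] at hperm
      rw [hperm]; exact neg_eq_self_char_two p2 _
  rw [← hsign, ExteriorAlgebra.ιMulti_succ_apply, Fin.cons_zero]
  have : Matrix.vecTail (Fin.cons c (v ∘ k.succAbove)) = v ∘ k.succAbove := by
    funext j
    simp [Matrix.vecTail]
  rw [this]


lemma orderEmbOfFin_erase {n m : ℕ} (s : Finset (Fin n)) (h : s.card = m + 1)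
    (k : Fin (m + 1)) :
    (fun j : Fin m => s.orderEmbOfFin h (k.succAbove j))
      = (s.erase (s.orderEmbOfFin h k)).orderEmbOfFin
          (by simp [Finset.card_erase_of_mem (Finset.orderEmbOfFin_mem s h k), h]) := by
  apply Finset.orderEmbOfFin_unique
  · intro j
    rw [Finset.mem_erase]
    exact ⟨(s.orderEmbOfFin h).injective.ne (Fin.succAbove_ne k j),
      Finset.orderEmbOfFin_mem s h _⟩
  · exact (s.orderEmbOfFin h).strictMono.comp (Fin.strictMono_succAbove k)

lemma ιMulti_expand {M : Type*} [AddCommGroup M] [Module F M]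
    (a : ℕ) (v : Fin a → M) (c : M) :
    ExteriorAlgebra.ιMulti F a (fun j => v j + c)
      = ExteriorAlgebra.ιMulti F a v
        + ∑ k : Fin a, ExteriorAlgebra.ιMulti F a (Function.update v k c) := by
  have h1 : ExteriorAlgebra.ιMulti F a (fun j => v j + c)
      = ∑ s : Finset (Fin a),
          ExteriorAlgebra.ιMulti F a (s.piecewise v (fun _ => c)) :=
    MultilinearMap.map_add_univ (ExteriorAlgebra.ιMulti F a).toMultilinearMap v (fun _ => c)
  rw [h1]
  have h2 : ∑ s : Finset (Fin a),
        ExteriorAlgebra.ιMulti F a (s.piecewise v (fun _ => c))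
      = ∑ s : Finset (Fin a),
          ExteriorAlgebra.ιMulti F a (sᶜ.piecewise v (fun _ => c)) :=
    (Fintype.sum_bijective compl (Function.Involutive.bijective compl_compl) _ _
      (fun s => rfl)).symm
  rw [h2]
  set T0 : Finset (Finset (Fin a)) := insert ∅ (Finset.univ.image (fun k : Fin a => {k})) with hT0
  have hsub : ∑ s : Finset (Fin a),
        ExteriorAlgebra.ιMulti F a (sᶜ.piecewise v (fun _ => c))
      = ∑ s ∈ T0, ExteriorAlgebra.ιMulti F a (sᶜ.piecewise v (fun _ => c)) := by
    apply (Finset.sum_subset (Finset.subset_univ T0) _).symm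
    intro u _ hu
    have hcard : 1 < u.card := by
      rcases Nat.lt_or_ge u.card 2 with hlt | hge
      · exfalso
        interval_cases h : u.card
        · exact hu (by simp [hT0, Finset.card_eq_zero.mp h])
        · obtain ⟨x, hx⟩ := Finset.card_eq_one.mp h
          exact hu (by simp [hT0, hx])
      · omega
    obtain ⟨x, hx, y, hy, hxy⟩ := Finset.one_lt_card.mp hcard
    apply AlternatingMap.map_eq_zero_of_eq _ _ (i := x) (j := y) _ hxy
    have hx' : x ∉ uᶜ := by simp [hx]
    have hy' : y ∉ uᶜ := by simp [hy]
    rw [Finset.piecewise_eq_of_notMem _ _ _ hx', Finset.piecewise_eq_of_notMem _ _ _ hy']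
  rw [hsub, hT0, Finset.sum_insert (by simp)]
  congr 1
  · rw [Finset.compl_empty, Finset.piecewise_univ]
  · rw [Finset.sum_image (fun x _ y _ h => Finset.singleton_injective h)]
    apply Finset.sum_congr rfl
    intro k _
    congr 1
    rw [Finset.piecewise_compl, Finset.piecewise_singleton]


lemma key (p2 : CharP F 2) (n b m : ℕ) (hbn : b < n)
    (f : Fin n → (Fin n → F)) (c : Fin n → F) :
    wedgeSum F n (fun i => f i + c) b (m + 1)
      = wedgeSum F n f b (m + 1)
        + ((b - m : ℕ) : F) • (ExteriorAlgebra.ι F c * wedgeSum F n f b m) := by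
  simp only [wedgeSum]
  set P : ℕ → Finset (Finset (Fin n)) := fun a => Finset.univ.filter
      (fun s : Finset (Fin n) => s.card = a ∧ ∀ i ∈ s, (i : ℕ) < b) with hP
  set Q : Finset (Fin n) → ExteriorAlgebra F (Fin n → F) := fun T =>
    if hT : T.card = m ∧ ∀ i ∈ T, (i : ℕ) < b
    then ExteriorAlgebra.ι F c
        * ExteriorAlgebra.ιMulti F m (fun j => f (T.orderEmbOfFin hT.1 j))
    else 0 with hQ
  have hL : ∀ S ∈ (P (m + 1)).attach,
      ExteriorAlgebra.ιMulti F (m + 1)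
        (fun j => (fun i => f i + c)
          ((S.1.orderIsoOfFin ((Finset.mem_filter.mp S.2).2.1) j : Fin n)))
      = ExteriorAlgebra.ιMulti F (m + 1)
          (fun j => f ((S.1.orderIsoOfFin ((Finset.mem_filter.mp S.2).2.1) j : Fin n)))
        + ∑ x ∈ S.1, Q (S.1.erase x) := by
    intro S _
    have hc : S.1.card = m + 1 := (Finset.mem_filter.mp S.2).2.1
    have hb : ∀ i ∈ S.1, (i : ℕ) < b := (Finset.mem_filter.mp S.2).2.2
    simp only [Finset.coe_orderIsoOfFin_apply]
    rw [ιMulti_expand (m + 1) (fun j => f (S.1.orderEmbOfFin hc j)) c]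
    congr 1
    have e2 : ∀ k : Fin (m + 1),
        ExteriorAlgebra.ιMulti F (m + 1)
          (Function.update (fun j => f (S.1.orderEmbOfFin hc j)) k c)
        = Q (S.1.erase (S.1.orderEmbOfFin hc k)) := by
      intro k
      rw [ιMulti_update p2]
      have hT : (S.1.erase (S.1.orderEmbOfFin hc k)).card = m
          ∧ ∀ i ∈ S.1.erase (S.1.orderEmbOfFin hc k), (i : ℕ) < b :=
        ⟨by simp [Finset.card_erase_of_mem (Finset.orderEmbOfFin_mem _ hc k), hc],
         fun i hi => hb i (Finset.mem_of_mem_erase hi)⟩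
      simp only [hQ]
      rw [dif_pos hT]
      congr 1
      congr 1
      funext j
      rw [Function.comp_apply]
      exact congrArg f (congrFun (orderEmbOfFin_erase S.1 hc k) j)
    rw [Finset.sum_congr rfl (fun k _ => e2 k)]
    rw [← Finset.sum_coe_sort S.1 (fun x => Q (S.1.erase x))]
    exact Fintype.sum_equiv (S.1.orderIsoOfFin hc).toEquiv _ _
      (fun k => by simp [Finset.coe_orderIsoOfFin_apply])
  rw [Finset.sum_congr rfl hL, Finset.sum_add_distrib]
  congr 1
  rw [Finset.sum_attach (P (m + 1)) (fun S => ∑ x ∈ S, Q (S.erase x))]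
  have hswap : ∑ S ∈ P (m + 1), ∑ x ∈ S, Q (S.erase x)
      = ∑ T ∈ P m, ∑ _y ∈ Finset.univ.filter (fun y : Fin n => y ∉ T ∧ (y : ℕ) < b), Q T := by
    rw [Finset.sum_sigma', Finset.sum_sigma']
    refine Finset.sum_nbij' (i := fun p => ⟨p.1.erase p.2, p.2⟩)
      (j := fun q => ⟨insert q.2 q.1, q.2⟩) ?_ ?_ ?_ ?_ ?_
    · rintro ⟨S, x⟩ hp
      rw [Finset.mem_sigma] at hp ⊢
      obtain ⟨hS, hx⟩ := hp
      rw [hP] at hS; simp only [Finset.mem_filter, Finset.mem_univ, true_and] at hS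
      refine ⟨?_, ?_⟩
      · rw [hP]; simp only [Finset.mem_filter, Finset.mem_univ, true_and]
        exact ⟨by simp [Finset.card_erase_of_mem hx, hS.1], fun i hi => hS.2 i (Finset.mem_of_mem_erase hi)⟩
      · simp only [Finset.mem_filter, Finset.mem_univ, true_and]
        exact ⟨Finset.notMem_erase x S, hS.2 x hx⟩
    · rintro ⟨T, y⟩ hq
      rw [Finset.mem_sigma] at hq ⊢
      obtain ⟨hT, hy⟩ := hq
      rw [hP] at hT; simp only [Finset.mem_filter, Finset.mem_univ, true_and] at hT
      simp only [Finset.mem_filter, Finset.mem_univ, true_and] at hy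
      refine ⟨?_, Finset.mem_insert_self y T⟩
      rw [hP]; simp only [Finset.mem_filter, Finset.mem_univ, true_and]
      refine ⟨by rw [Finset.card_insert_of_notMem hy.1, hT.1], ?_⟩
      intro i hi
      rcases Finset.mem_insert.mp hi with h | h
      · rw [h]; exact hy.2
      · exact hT.2 i h
    · rintro ⟨S, x⟩ hp
      rw [Finset.mem_sigma] at hp
      exact Sigma.ext (by simp [Finset.insert_erase hp.2]) (by simp)
    · rintro ⟨T, y⟩ hq
      rw [Finset.mem_sigma] at hq
      have hy := hq.2
      simp only [Finset.mem_filter, Finset.mem_univ, true_and] at hy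
      exact Sigma.ext (by simp [Finset.erase_insert hy.1]) (by simp)
    · rintro ⟨S, x⟩ _
      rfl
  rw [hswap]
  have hconst : ∀ T ∈ P m,
      ∑ _y ∈ Finset.univ.filter (fun y : Fin n => y ∉ T ∧ (y : ℕ) < b), Q T
      = (b - m) • Q T := by
    intro T hT
    rw [hP] at hT; simp only [Finset.mem_filter, Finset.mem_univ, true_and] at hT
    rw [Finset.sum_const, card_count hbn T hT.1 hT.2]
  rw [Finset.sum_congr rfl hconst, ← Finset.smul_sum, ← Nat.cast_smul_eq_nsmul F]
  congr 1
  rw [← Finset.sum_attach (P m) Q, Finset.mul_sum]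
  apply Finset.sum_congr rfl
  intro T _
  have h2 : T.1.card = m ∧ ∀ i ∈ T.1, (i : ℕ) < b := (Finset.mem_filter.mp T.2).2
  simp only [hQ]
  rw [dif_pos h2]
  simp only [Finset.coe_orderIsoOfFin_apply]


lemma wedgeSum_zero (n b : ℕ) (f : Fin n → (Fin n → F)) :
    wedgeSum F n f b 0 = 1 := by
  simp only [wedgeSum]
  have h1 : (Finset.univ.filter
      (fun s : Finset (Fin n) => s.card = 0 ∧ ∀ i ∈ s, (i : ℕ) < b)) = {∅} := by
    ext s
    simp only [Finset.mem_filter, Finset.mem_univ, true_and, Finset.mem_singleton,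
      Finset.card_eq_zero]
    constructor
    · exact fun h => h.1
    · rintro rfl
      exact ⟨rfl, fun i hi => absurd hi (Finset.notMem_empty i)⟩
  rw [Finset.sum_congr rfl (fun s _ => ExteriorAlgebra.ιMulti_zero_apply _)]
  rw [Finset.sum_const, Finset.card_attach, h1, Finset.card_singleton, one_smul]

end Aux

/-- Let `F` have characteristic 2, `A_n = F^n` with basis `e_1, …, e_n`, and
`f_i = e_i - e_n`.  For `1 ≤ a ≤ b < n` and `b + 1 ≤ s ≤ n` (here `s` is the 0-indexed
element `es : Fin n` with `b ≤ es`), setting `v_{b,a} = ∑ f_{i_1} ∧ ⋯ ∧ f_{i_a}` over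
increasing tuples in `{1, …, b}`, one has
`∑ (e_{i_1} + e_s) ∧ ⋯ ∧ (e_{i_a} + e_s) = v_{b,a} + b • f_s` when `a = 1`, and
`= v_{b,a} + (b - a + 1) • (f_s ∧ v_{b,a-1})` when `a > 1`. -/
theorem wedge_sum_identity_char_two (p2 : CharP F 2) (n a b : ℕ)
    (ha : 1 ≤ a) (hab : a ≤ b) (hbn : b < n) (es : Fin n) (hs : b ≤ (es : ℕ))
    (f : Fin n → (Fin n → F))
    (hf : ∀ i : Fin n, f i = Pi.single i 1 - Pi.single (⟨n - 1, by omega⟩ : Fin n) 1) :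
    (a = 1 →
      wedgeSum F n (fun i => Pi.single i 1 + Pi.single es 1) b a
        = wedgeSum F n f b a + (b : F) • ExteriorAlgebra.ι F (f es))
    ∧ (1 < a →
      wedgeSum F n (fun i => Pi.single i 1 + Pi.single es 1) b a
        = wedgeSum F n f b a
          + ((b - a + 1 : ℕ) : F) • (ExteriorAlgebra.ι F (f es) * wedgeSum F n f b (a - 1))) := by
  have h2 : (1 : F) + 1 = 0 := by
    haveI := p2
    have h := CharP.cast_eq_zero F 2
    rw [show ((2 : ℕ) : F) = 1 + 1 by push_cast; ring] at h
    exact h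
  have hg : (fun i : Fin n => (Pi.single i 1 : Fin n → F) + Pi.single es 1)
      = fun i => f i + f es := by
    funext i
    rw [hf i, hf es]
    have h1 : (Pi.single (⟨n - 1, by omega⟩ : Fin n) (1 : F) : Fin n → F)
        + Pi.single (⟨n - 1, by omega⟩ : Fin n) (1 : F) = 0 := by
      rw [← Pi.single_add, h2, Pi.single_zero]
    have habel : ∀ (A B C : Fin n → F), (A - C) + (B - C) = A + B - (C + C) :=
      fun A B C => by abel
    rw [habel, h1, sub_zero]
  constructor
  · rintro rfl
    have hk := key p2 n b 0 hbn f (f es)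
    rw [wedgeSum_zero, mul_one, Nat.sub_zero, zero_add] at hk
    rw [hg]
    exact hk
  · intro ha1
    obtain ⟨m, rfl⟩ : ∃ m, a = m + 1 := ⟨a - 1, by omega⟩
    have hk := key p2 n b m hbn f (f es)
    rw [hg, hk, show m + 1 - 1 = m from rfl,
      show b - (m + 1) + 1 = b - m by omega]
end

section
/- Let p be a prime, n and r positive integers with 2r ≤ n, and set λ = (2^r, 1^{n-2r}), the partition of n with r parts equal to 2 and n-2r parts equal to 1. The hook lengths of λ are: h_{i,1} = n - 2r + (r - i) + r - i + 2 - 1 for the first column and h_{i,2} = r - i + 1 for the second column (1 ≤ i ≤ r), and h_{j,1} = n - j - r + 1 for r < j ≤ n - r. Suppose there exist row indices with unequal p-adic valuations of the two hook lengths in that row, and let a be the largest index i ≤ r such that ν_p(h_{i,1}) ≠ ν_p(h_{i,2}). Then there exist integers u, v, w with 0 ≤ u, v < p and w ≥ 0 such that h_{a,2} = u + v·p^w. -/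
/-!
Put `d = n - 2r + 1 = h_{i,1} - h_{i,2}` and `k = r - i + 1`, so that the row condition reads
`ν_p(d + k) ≠ ν_p(k)` and `m = h_{a,2}` is the least `k ≥ 1` satisfying it. With `t = ν_p(d)`,
every `k` with `ν_p(k) < t` has `ν_p(d + k) = ν_p(k)`, while `k = p^(t+1)` has `ν_p(d + k) = t`.
Hence `p^t ∣ m ≤ p^(t+1)`, i.e. `m = c p^t` with `1 ≤ c ≤ p`, which is a single digit times a
power of `p`.
-/

theorem padicValNat_add_of_lt {p a b : ℕ} [Fact p.Prime] (ha : a ≠ 0) (hb : b ≠ 0)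
    (h : padicValNat p b < padicValNat p a) : padicValNat p (a + b) = padicValNat p b := by
  have hab : a + b ≠ 0 := by omega
  apply le_antisymm
  · by_contra! hlt
    have hsum : p ^ (padicValNat p b + 1) ∣ a + b := (padicValNat_dvd_iff_le hab).2 hlt
    have hleft : p ^ (padicValNat p b + 1) ∣ a := (padicValNat_dvd_iff_le ha).2 h
    exact pow_succ_padicValNat_not_dvd hb ((Nat.dvd_add_right hleft).1 hsum)
  · rw [← padicValNat_dvd_iff_le hab]
    exact dvd_add ((padicValNat_dvd_iff_le ha).2 h.le) pow_padicValNat_dvd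

theorem exists_lt_mul_pow_of_dvd_of_le_pow_succ {p t m : ℕ} (hp : 1 < p) (hdvd : p ^ t ∣ m)
    (hle : m ≤ p ^ (t + 1)) : ∃ v w, v < p ∧ m = v * p ^ w := by
  obtain ⟨c, rfl⟩ := hdvd
  have hc : c ≤ p := by
    rw [pow_succ', mul_comm (p ^ t)] at hle
    exact Nat.le_of_mul_le_mul_right hle (by positivity)
  rcases hc.lt_or_eq with hc | rfl
  · exact ⟨c, t, hc, mul_comm _ _⟩
  · exact ⟨1, t + 1, hp, by rw [one_mul, pow_succ]⟩

theorem exists_lt_mul_pow_of_isLeast_padicValNat_add_ne {p d m : ℕ} [hp : Fact p.Prime]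
    (hd : d ≠ 0) (hm : m ≠ 0) (hne : padicValNat p (d + m) ≠ padicValNat p m)
    (hmin : ∀ k, 0 < k → k < m → padicValNat p (d + k) = padicValNat p k) :
    ∃ v w, v < p ∧ m = v * p ^ w := by
  refine exists_lt_mul_pow_of_dvd_of_le_pow_succ hp.out.one_lt
    (t := padicValNat p d) ?_ ?_
  · rw [padicValNat_dvd_iff_le hm]
    by_contra! hlt
    exact hne (padicValNat_add_of_lt hd hm hlt)
  · by_contra! hlt
    have hpow : p ^ (padicValNat p d + 1) ≠ 0 := pow_ne_zero _ hp.out.ne_zero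
    have hfar := hmin _ (Nat.pos_of_ne_zero hpow) hlt
    rw [add_comm, padicValNat_add_of_lt hpow hd (by simp), padicValNat.prime_pow] at hfar
    omega

theorem hook_padic_two_digits_general (p : ℕ) (hp : p.Prime) (n r a : ℕ)
    (h2r : 2 * r ≤ n) (har : a ≤ r)
    (hne : padicValNat p (n - r - a + 2) ≠ padicValNat p (r - a + 1))
    (hmax : ∀ i, a < i → i ≤ r →
      padicValNat p (n - r - i + 2) = padicValNat p (r - i + 1)) :
    ∃ u v w : ℕ, u < p ∧ v < p ∧ r - a + 1 = u + v * p ^ w := by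
  have hne' : padicValNat p (n - 2 * r + 1 + (r - a + 1)) ≠ padicValNat p (r - a + 1) := by
    rwa [show n - 2 * r + 1 + (r - a + 1) = n - r - a + 2 by omega]
  have : Fact p.Prime := ⟨hp⟩
  obtain ⟨v, w, hv, hm⟩ := exists_lt_mul_pow_of_isLeast_padicValNat_add_ne
    (Nat.succ_ne_zero _) (Nat.succ_ne_zero _) hne' fun k hk hkm => by
      have hrow := hmax (r + 1 - k) (by omega) (by omega)
      rwa [show n - r - (r + 1 - k) + 2 = n - 2 * r + 1 + k by omega,
        show r - (r + 1 - k) + 1 = k by omega] at hrow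
  exact ⟨0, v, w, hp.pos, hv, by rw [zero_add, ← hm]⟩

/-- For the partition `λ = (2^r, 1^{n-2r})` of `n`, the hook lengths in row `i ≤ r` are
`h_{i,1} = n - r - i + 2` and `h_{i,2} = r - i + 1`.  If `a` is the largest row index
`i ≤ r` for which the two hook lengths of that row have different `p`-adic valuations,
then `h_{a,2}` has a `p`-adic expansion with at most two nonzero digits, one of which is
the units digit: `h_{a,2} = u + v * p ^ w` with `0 ≤ u, v < p`. -/
theorem hook_padic_two_digits (p : ℕ) (hp : p.Prime) (n r a : ℕ)
    (hr : 0 < r) (h2r : 2 * r ≤ n) (ha : 0 < a) (har : a ≤ r)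
    (hne : padicValNat p (n - r - a + 2) ≠ padicValNat p (r - a + 1))
    (hmax : ∀ i, a < i → i ≤ r →
      padicValNat p (n - r - i + 2) = padicValNat p (r - i + 1)) :
    ∃ u v w : ℕ, u < p ∧ v < p ∧ r - a + 1 = u + v * p ^ w :=
  hook_padic_two_digits_general p hp n r a h2r har hne hmax
end

section
/- Let p be an odd prime, λ = (2^r, 1^{n-2r}) a partition of n with r ≥ 1. Suppose ν_p(h_{1,1}) ≠ ν_p(h_{1,2}), ν_p(h_{i,1}) = ν_p(h_{i,2}) for all 2 ≤ i ≤ r, and that h_{1,2} ≥ p with h_{1,2} = b_s·p^s for some 0 < b_s < p and s > 0 (only two-digit p-adic expansion with zero units digit). Write the p-adic expansion h_{1,1} = ∑_{i>0} a_i p^i with all a_i in [0,p) and let t > 0 be minimal with a_t > 0 (so ν_p(h_{1,1}) = t). Then s < t. -/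
private lemma padicValNat_eq_of_dvd_of_not_dvd {p m t : ℕ} (hp : p.Prime) (hm : m ≠ 0)
    (h1 : p ^ t ∣ m) (h2 : ¬ p ^ (t + 1) ∣ m) : padicValNat p m = t := by
  have ht : t ≤ m.factorization p := (Nat.Prime.pow_dvd_iff_le_factorization hp hm).mp h1
  have ht2 : ¬ (t + 1 ≤ m.factorization p) := fun h =>
    h2 ((Nat.Prime.pow_dvd_iff_le_factorization hp hm).mpr h)
  have : m.factorization p = t := by omega
  rwa [Nat.factorization_def m hp] at this

/-- Let `p` be an odd prime and `λ = (2^r, 1^{n-2r})` with `r ≥ 1`, with hook lengths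
`h_{i,1} = n - r - i + 1` and `h_{i,2} = r - i + 1` in row `i ≤ r` (so `h_{1,1} = n - r`
and `h_{1,2} = r`).  Suppose the two hook lengths of the first row have different
`p`-adic valuations, those of every row `2 ≤ i ≤ r` have equal `p`-adic valuations,
`h_{1,2} = b_s * p ^ s` with `0 < b_s < p` and `s > 0` (in particular `h_{1,2} ≥ p`),
and `h_{1,1}` has `p`-adic expansion `∑_{i>0} a_i p^i` (zero units digit) with `t > 0`
minimal such that `a_t ≠ 0`.  Then `s < t`. -/
theorem hook_valuation_comparison (p : ℕ) (hp : p.Prime) (hodd : p ≠ 2)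
    (n r s t bs N : ℕ) (a : ℕ → ℕ)
    (hr : 1 ≤ r) (h2r : 2 * r ≤ n)
    (hne : padicValNat p (n - r) ≠ padicValNat p r)
    (heq : ∀ i, 2 ≤ i → i ≤ r →
      padicValNat p (n - r - i + 1) = padicValNat p (r - i + 1))
    (hgep : p ≤ r)
    (hbs0 : 0 < bs) (hbsp : bs < p) (hs : 0 < s) (hr2 : r = bs * p ^ s)
    (hdig : ∀ i, a i < p) (ha0 : a 0 = 0)
    (hexp : n - r = ∑ i ∈ Finset.range N, a i * p ^ i)
    (hsupp : ∀ i, N ≤ i → a i = 0)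
    (ht0 : 0 < t) (hat : a t ≠ 0) (htmin : ∀ i, 0 < i → i < t → a i = 0) :
    s < t := by
  haveI : Fact p.Prime := ⟨hp⟩
  have hp1 : 1 < p := hp.one_lt
  have hA : r ≤ n - r := by omega
  have hA0 : n - r ≠ 0 := by omega
  have htN : t < N := by
    by_contra h
    exact hat (hsupp t (by omega))
  have hlow : ∀ i, i < t → a i = 0 := by
    intro i hi
    rcases Nat.eq_zero_or_pos i with h | h
    · simpa [h] using ha0
    · exact htmin i h hi
  set S : ℕ := ∑ i ∈ (Finset.range N).erase t, a i * p ^ i with hS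
  have hsplit : n - r = a t * p ^ t + S := by
    rw [hexp]
    exact (Finset.add_sum_erase _ (fun i => a i * p ^ i)
      (Finset.mem_range.mpr htN)).symm
  have hSdvd : p ^ (t + 1) ∣ S := by
    apply Finset.dvd_sum
    intro i hi
    rcases Finset.mem_erase.mp hi with ⟨hit, _⟩
    rcases lt_trichotomy i t with h | h | h
    · simp [hlow i h]
    · exact absurd h hit
    · exact Dvd.dvd.mul_left (pow_dvd_pow p (by omega)) _
  have hptne : (p : ℕ) ^ t ≠ 0 := pow_ne_zero t (by omega)
  have hvA : padicValNat p (n - r) = t := by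
    apply padicValNat_eq_of_dvd_of_not_dvd hp hA0
    · rw [hsplit]
      exact Nat.dvd_add (Dvd.dvd.mul_left (dvd_refl _) _)
        (dvd_trans (pow_dvd_pow p (by omega)) hSdvd)
    · intro hdv
      rw [hsplit] at hdv
      have h1 : p ^ (t + 1) ∣ a t * p ^ t := (Nat.dvd_add_right hSdvd).mp
        (by rw [add_comm (a t * p ^ t) S] at hdv; exact hdv)
      have h2 : p ∣ a t := by
        have h1' : p * p ^ t ∣ a t * p ^ t := by rwa [← pow_succ'] 
        exact (mul_dvd_mul_iff_right hptne).mp h1'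
      have h3 := Nat.le_of_dvd (Nat.pos_of_ne_zero hat) h2
      have h4 := hdig t
      omega
  have hvr : padicValNat p r = s := by
    rw [hr2, padicValNat.mul (by omega) (pow_ne_zero s (by omega)),
      padicValNat.eq_zero_of_not_dvd (fun h => by
        have := Nat.le_of_dvd hbs0 h; omega),
      padicValNat.prime_pow, zero_add]
  have hst : s ≠ t := by
    rw [hvA, hvr] at hne; exact fun h => hne h.symm
  rcases lt_or_ge s t with h | h
  · exact h
  have hts : t < s := by omega
  exfalso
  have hat1 : 1 ≤ a t := Nat.pos_of_ne_zero hat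
  have hpt : a t * p ^ t < p ^ s := by
    have h0 : 0 < p ^ t := by positivity
    have h1 : a t * p ^ t < p * p ^ t := by
      have := hdig t
      exact Nat.mul_lt_mul_of_lt_of_le this le_rfl h0
    have h2 : p * p ^ t = p ^ (t + 1) := by ring
    have h3 : p ^ (t + 1) ≤ p ^ s := Nat.pow_le_pow_right (by omega) (by omega)
    omega
  have hjr : a t * p ^ t < r := by
    have h1 : p ^ s ≤ bs * p ^ s := Nat.le_mul_of_pos_left _ hbs0
    omega
  set j : ℕ := a t * p ^ t with hj
  have hj1 : 1 ≤ j := Nat.one_le_iff_ne_zero.mpr (Nat.mul_ne_zero hat hptne)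
  have key := heq (j + 1) (by omega) (by omega)
  have e1 : n - r - (j + 1) + 1 = (n - r) - j := by omega
  have e2 : r - (j + 1) + 1 = r - j := by omega
  rw [e1, e2] at key
  have hSe : (n - r) - j = S := by omega
  have hSpos : S ≠ 0 := by omega
  have hrj : r - j = p ^ t * (bs * p ^ (s - t) - a t) := by
    rw [Nat.mul_sub]
    congr 1
    · rw [hr2, ← mul_assoc, mul_comm (p ^ t) bs, mul_assoc, ← pow_add]
      congr 2
      omega
    · rw [hj]; ring
  have hbc : a t < bs * p ^ (s - t) := by
    have h1 : p ≤ p ^ (s - t) := by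
      calc p = p ^ 1 := (pow_one p).symm
        _ ≤ p ^ (s - t) := Nat.pow_le_pow_right (by omega) (by omega)
    have h2 : p ^ (s - t) ≤ bs * p ^ (s - t) := Nat.le_mul_of_pos_left _ hbs0
    have := hdig t
    omega
  have hvrj : padicValNat p (r - j) = t := by
    apply padicValNat_eq_of_dvd_of_not_dvd hp (by omega)
    · rw [hrj]; exact Dvd.intro _ rfl
    · intro hdv
      rw [hrj] at hdv
      have h2 : p ∣ bs * p ^ (s - t) - a t := by
        have h1' : p * p ^ t ∣ (bs * p ^ (s - t) - a t) * p ^ t := by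
          rw [← pow_succ', mul_comm _ (p ^ t)]
          exact hdv
        exact (mul_dvd_mul_iff_right hptne).mp h1'
      have h3 : p ∣ bs * p ^ (s - t) := by
        have hps : p ^ (s - t) = p * p ^ (s - t - 1) := by
          rw [← pow_succ']
          congr 1
          omega
        rw [hps]
        exact Dvd.dvd.mul_left (Dvd.intro _ rfl) _
      have h5 := Nat.dvd_sub h3 h2
      have h6 : bs * p ^ (s - t) - (bs * p ^ (s - t) - a t) = a t := by omega
      rw [h6] at h5
      have h7 := Nat.le_of_dvd (Nat.pos_of_ne_zero hat) h5
      have h8 := hdig t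
      omega
  have hge : t + 1 ≤ padicValNat p ((n - r) - j) := by
    rw [hSe]
    have h1 := (Nat.Prime.pow_dvd_iff_le_factorization hp hSpos).mp hSdvd
    rwa [Nat.factorization_def S hp] at h1
  rw [key, hvrj] at hge
  omega
end
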